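/- Let n be a nonnegative integer, z1, z2 ∈ H, and s ∈ ℂ with Re(s) > n + 1. Then ∑_{c=1}^∞ ∑_{(a,d) ∈ ℤ², ad ≡ 1 (mod c)} c^{4s−2n} (c·conj(z1) + d)^{2n} / (|c z2 − a|^{4s−2n} · |c z1 + d|^{4s}) = ∑_{c=1}^∞ c^{2n−4s} ∑_{a0 = 1, gcd(a0, c) = 1}^{c} S_0(z2 + a0/c, 0, 2s − n) · S_{2n}(z1 + d0/c, 0, 2s), where for each a0 coprime to c, d0 ∈ {1, …, c} denotes the unique residue with a0 d0 ≡ −1 (mod c), and all the series converge absolutely. -/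

import Mathlib

open Complex Filter Topology

noncomputable section

/-- The `ν`-th term of the series `S_n(z, 0, s)`. -/
def Sterm (n : ℕ) (z s : ℂ) (ν : ℤ) : ℂ :=
  (starRingEnd ℂ z + (ν : ℂ)) ^ n / (‖z + (ν : ℂ)‖ : ℂ) ^ (2 * s)

/-- The series `S_n(z, 0, s) = ∑_{ν ∈ ℤ} (conj z + ν)^n / |z + ν|^{2s}`. -/
def Sseries (n : ℕ) (z s : ℂ) : ℂ := ∑' ν : ℤ, Sterm n z s ν

/-- The term of the `c > 0` part of `Ξ_n`, indexed by `c ≥ 1` and a pair `(a, d)` with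
`a d ≡ 1 (mod c)`. -/
def LHSterm (n : ℕ) (z1 z2 s : ℂ) (c : ℕ+) (p : ℤ × ℤ) : ℂ :=
  ((c : ℕ) : ℂ) ^ (4 * s - 2 * (n : ℂ)) * ((c : ℕ) * starRingEnd ℂ z1 + (p.2 : ℂ)) ^ (2 * n) /
    ((‖(c : ℕ) * z2 - (p.1 : ℂ)‖ : ℂ) ^ (4 * s - 2 * (n : ℂ)) *
      (‖(c : ℕ) * z1 + (p.2 : ℂ)‖ : ℂ) ^ (4 * s))

/-- For `a₀` coprime to `c`, the unique `d₀ ∈ {1, …, c}` with `a₀ d₀ ≡ −1 (mod c)`. -/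
def dZero (c a0 : ℕ) : ℕ :=
  if (-(a0 : ZMod c)⁻¹).val = 0 then c else (-(a0 : ZMod c)⁻¹).val

/-! Writing `a = -a₀ - cν` and `d = d₀ + cμ`, with `a₀ ∈ {1, …, c}` coprime to `c` and
`a₀ d₀ ≡ -1 (mod c)`, parametrises the pairs with `ad ≡ 1 (mod c)` by triples `(a₀, ν, μ)`.
Since `cz₂ - a = c (z₂ + a₀/c + ν)` and `cz₁ + d = c (z₁ + d₀/c + μ)`, the corresponding term
factors as `c^{2n-4s}` times a term of `S₀(z₂ + a₀/c, 0, 2s - n)` times a term of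
`S_{2n}(z₁ + d₀/c, 0, 2s)`, so for fixed `c` the inner sum is a finite sum of products of two
absolutely convergent series.

Absolute convergence of the whole double series comes from `c Im z ≤ |cz + d|`: it bounds the
`c`-power in the numerator and leaves `|cz₂ - a|^{-k} |cz₁ + d|^{-k}` with `k = 2 Re s - n > 2`,
a product of two Eisenstein-type summands over `ℤ²`. -/

namespace ZMod

variable {c : ℕ}

def valIcc (x : ZMod c) : ℕ := if x.val = 0 then c else x.val

lemma natCast_valIcc [NeZero c] (x : ZMod c) : (x.valIcc : ZMod c) = x := by
  unfold valIcc
  split_ifs with h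
  · rw [natCast_self, (val_eq_zero x).1 h]
  · exact natCast_zmod_val x

lemma valIcc_mem_Icc [NeZero c] (x : ZMod c) : x.valIcc ∈ Finset.Icc 1 c := by
  unfold valIcc
  split_ifs with h
  · exact Finset.mem_Icc.2 ⟨NeZero.one_le, le_rfl⟩
  · exact Finset.mem_Icc.2 ⟨Nat.one_le_iff_ne_zero.2 h, (val_lt x).le⟩

lemma valIcc_natCast {a : ℕ} (ha : a ∈ Finset.Icc 1 c) : (a : ZMod c).valIcc = a := by
  obtain ⟨ha1, hac⟩ := Finset.mem_Icc.1 ha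
  unfold valIcc
  rcases hac.lt_or_eq with hlt | rfl
  · rw [val_natCast_of_lt hlt, if_neg (by omega)]
  · rw [natCast_self, val_zero, if_pos rfl]

end ZMod

lemma natCast_dZero {c : ℕ} [NeZero c] (a0 : ℕ) : (dZero c a0 : ZMod c) = -(a0 : ZMod c)⁻¹ :=
  ZMod.natCast_valIcc _

abbrev InvPairs (c : ℕ) := {p : ℤ × ℤ // p.1 * p.2 ≡ 1 [ZMOD c]}

abbrev coprimeResidues (c : ℕ) : Finset ℕ :=
  Finset.filter (fun a0 => Nat.Coprime a0 c) (Finset.Icc 1 c)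

section InvPairs

variable (c : ℕ) [NeZero c]

def invPairOf (q : coprimeResidues c × ℤ × ℤ) : InvPairs c :=
  ⟨(-(q.1 : ℤ) - c * q.2.1, dZero c q.1 + c * q.2.2), by
    rw [← ZMod.intCast_eq_intCast_iff]
    push_cast
    rw [ZMod.natCast_self, natCast_dZero, zero_mul, zero_mul, sub_zero, add_zero, neg_mul_neg]
    exact ZMod.coe_mul_inv_eq_one _ (Finset.mem_filter.1 q.1.2).2⟩

lemma invPairOf_injective : Function.Injective (invPairOf c) := by
  rintro ⟨⟨a0, ha0⟩, ν, μ⟩ ⟨⟨a0', ha0'⟩, ν', μ'⟩ h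
  obtain ⟨ha, hd⟩ := Prod.ext_iff.1 (congrArg Subtype.val h)
  simp only [invPairOf] at ha hd
  have hcast : (a0 : ZMod c) = a0' := by
    simpa [ZMod.natCast_self] using congrArg (Int.cast : ℤ → ZMod c) ha
  obtain rfl : a0 = a0' := by
    rw [← ZMod.valIcc_natCast (Finset.mem_filter.1 ha0).1, hcast,
      ZMod.valIcc_natCast (Finset.mem_filter.1 ha0').1]
  have hc : (c : ℤ) ≠ 0 := Nat.cast_ne_zero.2 (NeZero.ne c)
  obtain rfl : ν = ν' := mul_left_cancel₀ hc (by linarith)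
  obtain rfl : μ = μ' := mul_left_cancel₀ hc (by linarith)
  rfl

lemma invPairOf_surjective : Function.Surjective (invPairOf c) := by
  rintro ⟨⟨a, d⟩, hp⟩
  have had : (a : ZMod c) * d = 1 := by
    simpa using (ZMod.intCast_eq_intCast_iff _ _ _).2 hp
  set a0 := (-(a : ZMod c)).valIcc
  have ha0 : (a0 : ZMod c) = -a := ZMod.natCast_valIcc _
  have hmem : a0 ∈ coprimeResidues c := by
    refine Finset.mem_filter.2 ⟨ZMod.valIcc_mem_Icc _, (ZMod.isUnit_iff_coprime _ _).1 ?_⟩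
    rw [ha0]
    exact (IsUnit.of_mul_eq_one _ had).neg
  have hd0 : (dZero c a0 : ZMod c) = d := by
    rw [natCast_dZero, ha0, ZMod.inv_eq_of_mul_eq_one _ _ (-(d : ZMod c)) (by rw [neg_mul_neg, had]), neg_neg]
  obtain ⟨ν, hν⟩ : (c : ℤ) ∣ -a - a0 :=
    (ZMod.intCast_zmod_eq_zero_iff_dvd _ _).1 (by push_cast; rw [ha0]; ring)
  obtain ⟨μ, hμ⟩ : (c : ℤ) ∣ d - dZero c a0 :=
    (ZMod.intCast_zmod_eq_zero_iff_dvd _ _).1 (by push_cast; rw [hd0]; ring)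
  exact ⟨⟨⟨a0, hmem⟩, ν, μ⟩, Subtype.ext (Prod.ext (by simp only [invPairOf]; linarith)
    (by simp only [invPairOf]; linarith))⟩

def invPairEquiv : coprimeResidues c × ℤ × ℤ ≃ InvPairs c :=
  .ofBijective (invPairOf c) ⟨invPairOf_injective c, invPairOf_surjective c⟩

end InvPairs

lemma LHSterm_eq_mul_Sterm (n : ℕ) (z1 z2 s : ℂ) (c : ℕ+) (a0 d0 : ℕ) (ν μ : ℤ) :
    LHSterm n z1 z2 s c (-(a0 : ℤ) - (c : ℕ) * ν, d0 + (c : ℕ) * μ) =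
      ((c : ℕ) : ℂ) ^ (2 * (n : ℂ) - 4 * s) * Sterm 0 (z2 + (a0 : ℂ) / (c : ℕ)) (2 * s - n) ν *
        Sterm (2 * n) (z1 + (d0 : ℂ) / (c : ℕ)) (2 * s) μ := by
  have hc : ((c : ℕ) : ℂ) ≠ 0 := Nat.cast_ne_zero.2 c.ne_zero
  have h2 : ((c : ℕ) : ℂ) * z2 - ((-(a0 : ℤ) - (c : ℕ) * ν : ℤ) : ℂ) =
      (c : ℕ) * (z2 + (a0 : ℂ) / (c : ℕ) + ν) := by
    push_cast; field_simp; ring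
  have h1 : ((c : ℕ) : ℂ) * z1 + ((d0 + (c : ℕ) * μ : ℤ) : ℂ) =
      (c : ℕ) * (z1 + (d0 : ℂ) / (c : ℕ) + μ) := by
    push_cast; field_simp; ring
  have h1' : ((c : ℕ) : ℂ) * starRingEnd ℂ z1 + ((d0 + (c : ℕ) * μ : ℤ) : ℂ) =
      (c : ℕ) * (starRingEnd ℂ (z1 + (d0 : ℂ) / (c : ℕ)) + μ) := by
    simp only [map_add, map_div₀, Complex.conj_natCast]; push_cast; field_simp; ring
  have hpow : ((c : ℕ) : ℂ) ^ (2 * (n : ℂ) - 4 * s) = ((c : ℕ) : ℂ) ^ (2 * n) / (c : ℕ) ^ (4 * s) := by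
    rw [Complex.cpow_sub _ _ hc, ← Complex.cpow_natCast]; push_cast; ring_nf
  simp only [LHSterm, Sterm]
  rw [h2, h1, h1', norm_mul, norm_mul, Complex.norm_natCast, ofReal_mul, ofReal_mul,
    mul_cpow_ofReal_nonneg (Nat.cast_nonneg _) (norm_nonneg _),
    mul_cpow_ofReal_nonneg (Nat.cast_nonneg _) (norm_nonneg _), ofReal_natCast, mul_pow, hpow,
    show 2 * (2 * s - n) = 4 * s - 2 * (n : ℂ) by ring, show 2 * (2 * s) = 4 * s by ring, pow_zero]
  field_simp

lemma summable_norm_add_intCast_rpow (w : ℂ) {t : ℝ} (ht : 1 < t) :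
    Summable fun ν : ℤ => ‖w + ν‖ ^ (-t) := by
  have hfin : {ν : ℤ | (ν : ℝ) + w.re = 0}.Finite :=
    Set.Subsingleton.finite fun ν hν μ hμ => by
      simp only [Set.mem_ofPred_eq] at hν hμ
      exact_mod_cast (by linarith : (ν : ℝ) = μ)
  refine ((Real.summable_one_div_int_add_rpow w.re t).2 ht).of_norm_bounded_eventually ?_
  filter_upwards [hfin.compl_mem_cofinite] with ν hν
  have hpos : 0 < |(ν : ℝ) + w.re| := abs_pos.2 hν
  have hle : |(ν : ℝ) + w.re| ≤ ‖w + ν‖ := by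
    simpa [add_comm] using Complex.abs_re_le_norm (w + ν)
  rw [Real.norm_of_nonneg (by positivity), one_div, ← Real.rpow_neg hpos.le]
  exact Real.rpow_le_rpow_of_nonpos hpos hle (by linarith)

lemma norm_Sterm {m : ℕ} {w : ℂ} (u : ℂ) {ν : ℤ} (hw : w + ν ≠ 0) :
    ‖Sterm m w u ν‖ = ‖w + ν‖ ^ ((m : ℝ) - 2 * u.re) := by
  have hpos : 0 < ‖w + ν‖ := norm_pos_iff.2 hw
  have hconj : starRingEnd ℂ w + ν = starRingEnd ℂ (w + ν) := by simp
  rw [Sterm, norm_div, norm_pow, hconj, Complex.norm_conj,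
    Complex.norm_cpow_eq_rpow_re_of_pos hpos, ← Real.rpow_natCast, ← Real.rpow_sub hpos]
  simp

lemma summable_norm_Sterm {m : ℕ} {w : ℂ} (hw : w.im ≠ 0) {u : ℂ} (hu : m + 1 < 2 * u.re) :
    Summable fun ν : ℤ => ‖Sterm m w u ν‖ := by
  refine (summable_norm_add_intCast_rpow w (t := 2 * u.re - m) (by linarith)).congr fun ν => ?_
  have hν : w + ν ≠ 0 := fun h => hw (by simpa using congrArg Complex.im h)
  rw [norm_Sterm u hν, neg_sub]

lemma summable_norm_Sterm_zero_and_two_mul (n : ℕ) {w1 w2 : ℂ} (hw1 : w1.im ≠ 0)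
    (hw2 : w2.im ≠ 0) {s : ℂ} (hs : 2 * (n : ℝ) + 1 < 4 * s.re) :
    Summable (fun ν : ℤ => ‖Sterm 0 w2 (2 * s - n) ν‖) ∧
      Summable (fun ν : ℤ => ‖Sterm (2 * n) w1 (2 * s) ν‖) := by
  have h2 : (2 * s - n).re = 2 * s.re - n := by simp
  have h1 : (2 * s).re = 2 * s.re := by simp
  exact ⟨summable_norm_Sterm hw2 (by rw [h2]; push_cast; linarith),
    summable_norm_Sterm hw1 (by rw [h1]; push_cast; linarith)⟩

lemma summable_norm_linear_rpow (z : UpperHalfPlane) {k : ℝ} (hk : 2 < k) :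
    Summable fun x : Fin 2 → ℤ => ‖(x 0 : ℂ) * z + x 1‖ ^ (-k) :=
  ((EisensteinSeries.summable_one_div_norm_rpow hk).mul_left _).of_nonneg_of_le
    (fun _ => by positivity) (EisensteinSeries.summand_bound z (by linarith))

lemma norm_LHSterm (n : ℕ) {z1 z2 : ℂ} (s : ℂ) (c : ℕ+) {a d : ℤ}
    (ha : (c : ℕ) * z2 - a ≠ 0) (hd : (c : ℕ) * z1 + d ≠ 0) :
    ‖LHSterm n z1 z2 s c (a, d)‖ =
      ((c : ℕ) / (‖(c : ℕ) * z2 - a‖ * ‖(c : ℕ) * z1 + d‖)) ^ (4 * s.re - 2 * n) := by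
  have hX := norm_pos_iff.2 ha
  have hY := norm_pos_iff.2 hd
  have hconj : (c : ℕ) * starRingEnd ℂ z1 + d = starRingEnd ℂ ((c : ℕ) * z1 + d) := by simp
  have hsplit : ‖(c : ℕ) * z1 + (d : ℂ)‖ ^ (4 * s.re) =
      ‖(c : ℕ) * z1 + (d : ℂ)‖ ^ (4 * s.re - 2 * n) * ‖(c : ℕ) * z1 + (d : ℂ)‖ ^ (2 * n) := by
    rw [← Real.rpow_natCast, ← Real.rpow_add hY]
    push_cast
    ring_nf
  rw [LHSterm, norm_div, norm_mul, norm_mul, norm_pow, hconj, Complex.norm_conj,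
    Complex.norm_natCast_cpow_of_pos c.pos, Complex.norm_cpow_eq_rpow_re_of_pos hX,
    Complex.norm_cpow_eq_rpow_re_of_pos hY, Real.div_rpow (by positivity) (by positivity),
    Real.mul_rpow hX.le hY.le]
  have hre : (4 * s - 2 * (n : ℂ)).re = 4 * s.re - 2 * n := by simp
  rw [hre, show (4 * s).re = 4 * s.re by simp, hsplit]
  field_simp

lemma norm_LHSterm_le (n : ℕ) {z1 z2 : ℂ} (hz1 : 0 < z1.im) (hz2 : 0 < z2.im) {s : ℂ}
    (hs : (n : ℝ) ≤ 2 * s.re) (c : ℕ+) (a d : ℤ) :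
    ‖LHSterm n z1 z2 s c (a, d)‖ ≤ (z1.im * z2.im) ^ (-(2 * s.re - n)) *
      (‖(c : ℕ) * z2 - a‖ ^ (-(2 * s.re - n)) * ‖(c : ℕ) * z1 + d‖ ^ (-(2 * s.re - n))) := by
  set k := 2 * s.re - n
  set X := ‖(c : ℕ) * z2 - a‖
  set Y := ‖(c : ℕ) * z1 + d‖
  have hc : (0 : ℝ) < (c : ℕ) := by exact_mod_cast c.pos
  have hX : (c : ℕ) * z2.im ≤ X := by simpa using Complex.im_le_norm ((c : ℕ) * z2 - a)
  have hY : (c : ℕ) * z1.im ≤ Y := by simpa using Complex.im_le_norm ((c : ℕ) * z1 + d)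
  have hX0 : 0 < X := (by positivity : (0 : ℝ) < (c : ℕ) * z2.im).trans_le hX
  have hY0 : 0 < Y := (by positivity : (0 : ℝ) < (c : ℕ) * z1.im).trans_le hY
  have hsq : ((c : ℕ) / (X * Y)) ^ 2 ≤ (z1.im * z2.im * (X * Y))⁻¹ := by
    have := mul_le_mul hX hY (by positivity) hX0.le
    rw [div_pow, inv_eq_one_div, div_le_div_iff₀ (by positivity) (by positivity)]
    nlinarith [mul_le_mul_of_nonneg_right this (by positivity : (0 : ℝ) ≤ X * Y)]
  rw [norm_LHSterm n s c (norm_pos_iff.1 hX0) (norm_pos_iff.1 hY0),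
    show 4 * s.re - 2 * n = 2 * k by ring, Real.rpow_mul (by positivity), Real.rpow_two,
    Real.rpow_neg (by positivity), Real.rpow_neg hX0.le, Real.rpow_neg hY0.le, ← mul_inv,
    ← Real.mul_rpow hX0.le hY0.le, ← mul_inv, ← Real.mul_rpow (by positivity) (by positivity),
    ← Real.inv_rpow (by positivity)]
  exact Real.rpow_le_rpow (by positivity) hsq (by linarith)

lemma summable_norm_LHSterm (n : ℕ) {z1 z2 : ℂ} (hz1 : 0 < z1.im) (hz2 : 0 < z2.im) {s : ℂ}
    (hs : (n : ℝ) + 2 < 2 * s.re) :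
    Summable fun x : Σ c : ℕ+, InvPairs c => ‖LHSterm n z1 z2 s x.1 x.2.1‖ := by
  have hk : 2 < 2 * s.re - n := by linarith
  let g : (Σ c : ℕ+, InvPairs c) → (Fin 2 → ℤ) × (Fin 2 → ℤ) := fun x => (![(x.1 : ℕ), -x.2.1.1], ![(x.1 : ℕ), x.2.1.2])
  have hg : Function.Injective g := by
    rintro ⟨c, ⟨a, d⟩, hp⟩ ⟨c', ⟨a', d'⟩, hp'⟩ h
    simp only [g, Prod.mk.injEq] at h
    obtain ⟨hca, hcd⟩ := h
    have hc : c = c' := by simpa using congrFun hca 0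
    have ha : a = a' := by simpa using congrFun hca 1
    have hd : d = d' := by simpa using congrFun hcd 1
    subst hc ha hd
    rfl
  have hG := (((summable_norm_linear_rpow ⟨z2, hz2⟩ hk).mul_of_nonneg
    (summable_norm_linear_rpow ⟨z1, hz1⟩ hk) (fun _ => by positivity)
    (fun _ => by positivity)).mul_left ((z1.im * z2.im) ^ (-(2 * s.re - n)))).comp_injective hg
  refine hG.of_nonneg_of_le (fun _ => norm_nonneg _) fun ⟨c, ⟨a, d⟩, _⟩ => ?_
  refine (norm_LHSterm_le n hz1 hz2 (by linarith) c a d).trans_eq ?_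
  simp [g, sub_eq_add_neg]

lemma tsum_LHSterm_fiber (n : ℕ) {z1 z2 : ℂ} (hz1 : z1.im ≠ 0) (hz2 : z2.im ≠ 0) {s : ℂ}
    (hs : 2 * (n : ℝ) + 1 < 4 * s.re) (c : ℕ+)
    (hsum : Summable fun p : InvPairs c => LHSterm n z1 z2 s c p.1) :
    ∑' p : InvPairs c, LHSterm n z1 z2 s c p.1 =
      ((c : ℕ) : ℂ) ^ (2 * (n : ℂ) - 4 * s) * ∑ a0 ∈ coprimeResidues c,
        Sseries 0 (z2 + (a0 : ℂ) / (c : ℕ)) (2 * s - n) *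
          Sseries (2 * n) (z1 + (dZero c a0 : ℂ) / (c : ℕ)) (2 * s) := by
  let e := invPairEquiv (c : ℕ)
  have hterm : ∀ q : coprimeResidues c × ℤ × ℤ, LHSterm n z1 z2 s c (e q).1 =
      ((c : ℕ) : ℂ) ^ (2 * (n : ℂ) - 4 * s) *
        (Sterm 0 (z2 + (q.1 : ℂ) / (c : ℕ)) (2 * s - n) q.2.1 *
          Sterm (2 * n) (z1 + (dZero c q.1 : ℂ) / (c : ℕ)) (2 * s) q.2.2) := fun q => by
    rw [← mul_assoc]
    exact LHSterm_eq_mul_Sterm n z1 z2 s c q.1 (dZero c q.1) q.2.1 q.2.2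
  have hfactor : ∀ a0 : coprimeResidues c,
      ∑' v : ℤ × ℤ, Sterm 0 (z2 + (a0 : ℂ) / (c : ℕ)) (2 * s - n) v.1 *
          Sterm (2 * n) (z1 + (dZero c a0 : ℂ) / (c : ℕ)) (2 * s) v.2 =
        Sseries 0 (z2 + (a0 : ℂ) / (c : ℕ)) (2 * s - n) *
          Sseries (2 * n) (z1 + (dZero c a0 : ℂ) / (c : ℕ)) (2 * s) := fun a0 =>
    have h := summable_norm_Sterm_zero_and_two_mul n (by simpa using hz1) (by simpa using hz2) hs
    (tsum_mul_tsum_of_summable_norm h.1 h.2).symm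
  rw [← e.tsum_eq, tsum_congr hterm, ((e.summable_iff.2 hsum).congr hterm).tsum_prod,
    Finset.mul_sum, ← Finset.tsum_subtype]
  exact tsum_congr fun a0 => by rw [tsum_mul_left, hfactor]

/-- Rewriting the `c > 0` part of `Ξ_n(z₁, z₂, s)` in terms of the series `S_m`. -/
theorem XiC_eq_Ssum (n : ℕ) (z1 z2 : ℂ) (hz1 : 0 < z1.im) (hz2 : 0 < z2.im)
    (s : ℂ) (hs : (n : ℝ) + 1 < s.re) :
    Summable (fun x : Σ c : ℕ+, {p : ℤ × ℤ // p.1 * p.2 ≡ 1 [ZMOD ((c : ℕ) : ℤ)]} =>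
      ‖LHSterm n z1 z2 s x.1 x.2.1‖) ∧
    (∀ (c : ℕ+) (a0 : ℕ), a0 ∈ Finset.filter (fun a0 => Nat.Coprime a0 (c : ℕ))
        (Finset.Icc 1 (c : ℕ)) →
      Summable (fun ν : ℤ => ‖Sterm 0 (z2 + (a0 : ℂ) / (c : ℕ)) (2 * s - (n : ℂ)) ν‖) ∧
      Summable (fun ν : ℤ =>
        ‖Sterm (2 * n) (z1 + ((dZero (c : ℕ) a0 : ℕ) : ℂ) / (c : ℕ)) (2 * s) ν‖)) ∧
    Summable (fun c : ℕ+ => ‖((c : ℕ) : ℂ) ^ (2 * (n : ℂ) - 4 * s) *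
      ∑ a0 ∈ Finset.filter (fun a0 => Nat.Coprime a0 (c : ℕ)) (Finset.Icc 1 (c : ℕ)),
        Sseries 0 (z2 + (a0 : ℂ) / (c : ℕ)) (2 * s - (n : ℂ)) *
          Sseries (2 * n) (z1 + ((dZero (c : ℕ) a0 : ℕ) : ℂ) / (c : ℕ)) (2 * s)‖) ∧
    (∑' c : ℕ+, ∑' p : {p : ℤ × ℤ // p.1 * p.2 ≡ 1 [ZMOD ((c : ℕ) : ℤ)]},
        LHSterm n z1 z2 s c p.1) =
      ∑' c : ℕ+, ((c : ℕ) : ℂ) ^ (2 * (n : ℂ) - 4 * s) *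
        ∑ a0 ∈ Finset.filter (fun a0 => Nat.Coprime a0 (c : ℕ)) (Finset.Icc 1 (c : ℕ)),
          Sseries 0 (z2 + (a0 : ℂ) / (c : ℕ)) (2 * s - (n : ℂ)) *
            Sseries (2 * n) (z1 + ((dZero (c : ℕ) a0 : ℕ) : ℂ) / (c : ℕ)) (2 * s) := by
  have hn : (0 : ℝ) ≤ n := n.cast_nonneg
  have hsig := summable_norm_LHSterm n hz1 hz2 (s := s) (by linarith)
  obtain ⟨hfiber, htotal⟩ := (summable_sigma_of_nonneg fun _ => norm_nonneg _).1 hsig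
  have hs' : 2 * (n : ℝ) + 1 < 4 * s.re := by linarith
  have hfiber_eq := fun c : ℕ+ =>
    tsum_LHSterm_fiber n hz1.ne' hz2.ne' hs' c (hfiber c).of_norm
  refine ⟨hsig, fun c a0 _ => summable_norm_Sterm_zero_and_two_mul n
    (by simpa using hz1.ne') (by simpa using hz2.ne') hs',
    htotal.of_nonneg_of_le (fun _ => norm_nonneg _) fun c => ?_, tsum_congr hfiber_eq⟩
  rw [← hfiber_eq c]
  exact norm_tsum_le_tsum_norm (hfiber c)

end
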